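/- Let M be a matroid, let S = {x₁, …, x_j} be an independent set enumerated in nonincreasing order of a weight function w (i.e., w(x₁) ≥ w(x₂) ≥ … ≥ w(x_j)), and let e ∉ S be an element such that {e} is independent but S ∪ {e} is dependent. Let i* := max{ i ∈ {1, …, j} : {x₁, …, x_{i−1}} ∪ {e} is independent }. Then every index t with (S \ {x_t}) ∪ {e} independent satisfies t ≤ i*, and hence w(x_t) ≥ w(x_{i*}); in particular x_{i*} attains the minimum of w over { y ∈ S : (S \ {y}) ∪ {e} is independent }. -/

import Mathlib

/-!
Every prefix of `S` avoiding `x t` lies in `S \ {x t}`, so `(S \ {x t}) ∪ {e}` independent forces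
`{x₁, …, x_{t-1}} ∪ {e}` independent and hence `t ≤ i*`. Conversely, by maximality of `i*`
(or, when `i* = j`, because `S ∪ {e}` is dependent) adding `x_{i*}` to the independent set
`P ∪ {e}`, `P = {x₁, …, x_{i*-1}}`, creates a dependence. Augmenting `P ∪ {e}` from `S` up to
size `|S|` therefore never picks `x_{i*}`, and the result is exactly `(S \ {x_{i*}}) ∪ {e}`.
-/

open Finset

attribute [local instance] Classical.propDecidable

universe u

/-- A matroid on a ground set `α`, given as a nonempty, downward closed family of
finite independent sets satisfying the augmentation property. -/
structure MatroidOn (α : Type u) where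
  Indep : Finset α → Prop
  nonempty : ∃ A, Indep A
  subset_indep : ∀ ⦃A B : Finset α⦄, A ⊆ B → Indep B → Indep A
  augment : ∀ ⦃A B : Finset α⦄, Indep A → Indep B → A.card < B.card →
    ∃ e ∈ B, e ∉ A ∧ Indep (insert e A)

/-- Submodularity of a set function. -/
def SubmodularFn {α : Type u} [DecidableEq α] (f : Finset α → ℝ) : Prop :=
  ∀ X Y : Finset α, X ⊆ Y → ∀ e, e ∉ Y →
    f (insert e Y) - f Y ≤ f (insert e X) - f X

/-- Monotonicity of a set function. -/
def MonotoneFn {α : Type u} (f : Finset α → ℝ) : Prop :=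
  ∀ X Y : Finset α, X ⊆ Y → f X ≤ f Y

variable {α : Type u} [DecidableEq α]

/-- The marginal gain `f(e | T) = f (T ∪ {e}) - f T`. -/
def marg (f : Finset α → ℝ) (T : Finset α) (e : α) : ℝ := f (insert e T) - f T

namespace MatroidOn

variable (M : MatroidOn α)

theorem exists_indep_superset_card_eq {I B : Finset α} (hI : M.Indep I) (hB : M.Indep B)
    {n : ℕ} (hIn : I.card ≤ n) (hnB : n ≤ B.card) :
    ∃ A, M.Indep A ∧ I ⊆ A ∧ A ⊆ I ∪ B ∧ A.card = n := by
  induction n with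
  | zero => exact ⟨I, hI, subset_rfl, subset_union_left, by omega⟩
  | succ n ih =>
    rcases hIn.eq_or_lt with hIn | hIn
    · exact ⟨I, hI, subset_rfl, subset_union_left, hIn⟩
    obtain ⟨A, hA, hIA, hAIB, rfl⟩ := ih (by omega) (by omega)
    obtain ⟨f, hfB, hfA, hfA'⟩ := M.augment hA hB (by omega)
    -- `augment` inserts with the classical `DecidableEq` instance
    replace hfA' : M.Indep (insert f A) := by convert hfA'
    refine ⟨insert f A, hfA', hIA.trans (subset_insert _ _), ?_, card_insert_of_notMem hfA⟩
    exact insert_subset (mem_union_right _ hfB) hAIB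

theorem indep_insert_erase_of_not_indep_insert {S P : Finset α} {e f : α} (hS : M.Indep S)
    (heS : e ∉ S) (hfS : f ∈ S) (hPS : P ⊆ S.erase f) (hP : M.Indep (insert e P))
    (hfP : ¬ M.Indep (insert f (insert e P))) : M.Indep (insert e (S.erase f)) := by
  have hcard : (insert e (S.erase f)).card = S.card := by
    rw [card_insert_of_notMem fun h => heS (mem_of_mem_erase h), card_erase_of_mem hfS]
    have := card_pos.mpr ⟨f, hfS⟩
    omega
  have hPcard : (insert e P).card ≤ S.card := by
    grw [card_insert_le, card_le_card hPS, ← hcard, card_insert_of_notMem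
      fun h => heS (mem_of_mem_erase h)]
  obtain ⟨A, hA, hPA, hAPS, hAcard⟩ := M.exists_indep_superset_card_eq hP hS hPcard le_rfl
  have hfA : f ∉ A := fun hf => hfP (M.subset_indep (insert_subset hf hPA) hA)
  have hAsub : A ⊆ insert e (S.erase f) := by
    intro a ha
    have : a ∈ insert e S := by
      rcases mem_union.mp (hAPS ha) with h | h
      · exact insert_subset_insert e (hPS.trans (erase_subset f S)) h
      · exact mem_insert_of_mem h
    rcases mem_insert.mp this with rfl | h
    · exact mem_insert_self _ _
    · exact mem_insert_of_mem (mem_erase.mpr ⟨fun h' => hfA (h' ▸ ha), h⟩)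
  rwa [← eq_of_subset_of_card_le hAsub (hcard.trans hAcard.symm).le]

end MatroidOn

theorem Fin.exists_Iio_eq_Iic_or_Iic_eq_univ {j : ℕ} (t : Fin j) :
    (∃ t', t < t' ∧ Iio t' = Iic t) ∨ Iic t = univ := by
  by_cases ht : t.val + 1 < j
  · refine .inl ⟨⟨t.val + 1, ht⟩, Fin.lt_def.mpr (Nat.lt_succ_self _), ?_⟩
    ext s
    simp only [mem_Iio, mem_Iic, Fin.lt_def, Fin.le_def]
    omega
  · refine .inr (eq_univ_of_forall fun s => mem_Iic.mpr (Fin.le_def.mpr ?_))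
    omega

theorem image_Iio_subset_erase {β : Type*} [DecidableEq β] {j : ℕ} {x : Fin j → β}
    (hinj : Function.Injective x) (t : Fin j) : (Iio t).image x ⊆ (univ.image x).erase (x t) := by
  intro a ha
  obtain ⟨s, hs, rfl⟩ := mem_image.mp ha
  exact mem_erase.mpr ⟨hinj.ne (mem_Iio.mp hs).ne, mem_image_of_mem x (mem_univ s)⟩

theorem swap_candidate_attains_minimum_weight
    (M : MatroidOn α) {j : ℕ} (x : Fin j → α) (hinj : Function.Injective x)
    (w : α → ℝ) (hsorted : ∀ s t : Fin j, s ≤ t → w (x t) ≤ w (x s))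
    (S : Finset α) (hS : S = Finset.univ.image x) (hSind : M.Indep S)
    (e : α) (heS : e ∉ S) (hdep : ¬ M.Indep (insert e S))
    (istar : Fin j)
    (histar : M.Indep (insert e ((Finset.univ.filter fun t => t < istar).image x)))
    (hmax : ∀ t : Fin j,
      M.Indep (insert e ((Finset.univ.filter fun s => s < t).image x)) → t ≤ istar) :
    (∀ t : Fin j, M.Indep (insert e (S.erase (x t))) → t ≤ istar ∧ w (x istar) ≤ w (x t)) ∧
      M.Indep (insert e (S.erase (x istar))) ∧
      ∀ y ∈ S, M.Indep (insert e (S.erase y)) → w (x istar) ≤ w y := by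
  simp only [filter_gt_eq_Iio] at histar hmax
  subst hS
  have hle : ∀ t, M.Indep (insert e ((univ.image x).erase (x t))) → t ≤ istar := fun t ht =>
    hmax t (M.subset_indep (insert_subset_insert e (image_Iio_subset_erase hinj t)) ht)
  have hblocked : ¬ M.Indep (insert (x istar) (insert e ((Iio istar).image x))) := by
    rw [insert_comm, ← image_insert, Iio_insert]
    rcases Fin.exists_Iio_eq_Iic_or_Iic_eq_univ istar with ⟨t, hlt, hIio⟩ | hIic
    · exact fun h => (hmax t (hIio ▸ h)).not_gt hlt
    · exact hIic ▸ hdep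
  refine ⟨fun t ht => ⟨hle t ht, hsorted t istar (hle t ht)⟩,
    M.indep_insert_erase_of_not_indep_insert hSind heS (mem_image_of_mem x (mem_univ _))
      (image_Iio_subset_erase hinj istar) histar hblocked, ?_⟩
  rintro _ hy hind
  obtain ⟨t, -, rfl⟩ := mem_image.mp hy
  exact hsorted t istar (hle t hind)
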